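/- arXiv:2303.13942 — 3 statements merged into one kernel-verified Lean document; each statement's English description precedes it below -/
import Mathlib

section
/- Let q, p be real constants, L > 0, ξ ∈ ℤ, let (P_n)_{n∈ℤ} be an absolutely summable family of complex numbers, and suppose that for each k ∈ ℤ the function r_{k,ξ−k} : [0,∞) → ℂ is continuous, that Σ_k |r_{k,ξ−k}(0)| < ∞, that Σ_k sup_{τ∈[0,T]} |r_{k,ξ−k}(τ)| < ∞ for each T > 0, and that for all t ≥ 0 and all k: r_{k,ξ−k}(t) = exp(−i p 2π² ξ(2k−ξ) t / L²)·r_{k,ξ−k}(0) + ∫_0^t exp(−i p 2π² ξ(2k−ξ)(t−τ)/L²)·iq(P_{k−ξ} − P_k)·Σ_{K∈ℤ} r_{K,ξ−K}(τ) dτ. Then f(ξ,t) := Σ_{K∈ℤ} r_{K,ξ−K}(t) satisfies the scalar Volterra equation f(ξ,t) = φ_L(ξ,t) + ∫_0^t h_L(ξ, t−τ) f(ξ,τ) dτ, where φ_L(ξ,t) = Σ_k exp(−i p 2π² ξ(2k−ξ) t / L²) r_{k,ξ−k}(0) and h_L(ξ,s) = Σ_k exp(−i p 2π² ξ(2k−ξ)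 s / L²) iq(P_{k−ξ} − P_k). -/
/-!
Summing the mild equation over `k` gives the Volterra equation once the sum over `k` can be
split and passed under the time integral. The phases have modulus one, so the free terms are
dominated by `|r_{k,ξ-k}(0)|` and the Duhamel integrands by `|q (P_{k-ξ} - P_k)| |f(ξ,τ)|`;
both bounds are summable, and `f(ξ,·)` is continuous on compact time intervals because the
series defining it converges uniformly there. Dominated convergence then moves the sum inside.
-/

open MeasureTheory Set

theorem norm_le_iSup_norm_of_isCompact {X E : Type*} [TopologicalSpace X]
    [SeminormedAddCommGroup E] {g : X → E} {s : Set X} (hs : IsCompact s)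
    (hg : ContinuousOn g s) {x : X} (hx : x ∈ s) :
    ‖g x‖ ≤ ⨆ y : s, ‖g y‖ := by
  have hbdd := (hs.image_of_continuousOn hg.norm).bddAbove
  rw [image_eq_range] at hbdd
  exact le_ciSup hbdd ⟨x, hx⟩

theorem continuousOn_tsum_of_summable_iSup_norm {ι X E : Type*} [TopologicalSpace X]
    [NormedAddCommGroup E] [CompleteSpace E] {r : ι → X → E} {s : Set X} (hs : IsCompact s)
    (hr : ∀ k, ContinuousOn (r k) s) (hsum : Summable fun k => ⨆ x : s, ‖r k x‖) :
    ContinuousOn (fun x => ∑' k, r k x) s :=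
  continuousOn_tsum hr hsum fun k _ hx => norm_le_iSup_norm_of_isCompact hs (hr k) hx

theorem hasSum_intervalIntegral_mul_of_norm_le {ι A : Type*} [Countable ι] [NormedRing A]
    [NormedSpace ℝ A] [CompleteSpace A] {F : ι → ℝ → A} {f : ℝ → A} {c : ι → ℝ} {a b : ℝ}
    (hc : Summable c) (hF : ∀ n, ContinuousOn (F n) (uIcc a b))
    (hFc : ∀ n, ∀ τ ∈ uIcc a b, ‖F n τ‖ ≤ c n) (hf : ContinuousOn f (uIcc a b)) :
    HasSum (fun n => ∫ τ in a..b, F n τ * f τ) (∫ τ in a..b, (∑' n, F n τ) * f τ) := by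
  refine intervalIntegral.hasSum_integral_of_dominated_convergence (fun n τ => c n * ‖f τ‖)
    (fun n => (((hF n).mul hf).mono uIoc_subset_uIcc).aestronglyMeasurable measurableSet_uIoc)
    (fun n => ae_of_all _ fun τ hτ => ?_) (ae_of_all _ fun _ _ => hc.mul_right _) ?_
    (ae_of_all _ fun τ hτ => ?_)
  · exact (norm_mul_le _ _).trans
      (mul_le_mul_of_nonneg_right (hFc n τ (uIoc_subset_uIcc hτ)) (norm_nonneg _))
  · simp only [tsum_mul_right]
    exact (continuousOn_const.mul hf.norm).intervalIntegrable
  · exact ((hc.of_norm_bounded fun n => hFc n τ (uIoc_subset_uIcc hτ)).hasSum).mul_right _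

theorem norm_cexp_alber_phase (p L : ℝ) (ξ k : ℤ) (s : ℝ) :
    ‖Complex.exp (-Complex.I * p * (2 * Real.pi ^ 2) * (ξ : ℂ)
        * (2 * (k : ℂ) - ξ) * s / (L : ℂ) ^ 2)‖ = 1 := by
  rw [← Complex.norm_exp_ofReal_mul_I (-(p * (2 * Real.pi ^ 2) * ξ * (2 * k - ξ) * s / L ^ 2))]
  congr 2
  push_cast
  ring

theorem volterra_equation_for_f_general (q p L : ℝ) (ξ : ℤ) (P : ℤ → ℂ)
    (hP : Summable fun n => ‖P n‖)
    (r : ℤ → ℝ → ℂ)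
    (hcont : ∀ k, ContinuousOn (r k) (Set.Ici (0 : ℝ)))
    (hsum0 : Summable fun k : ℤ => ‖r k 0‖)
    (hsumT : ∀ T : ℝ, 0 < T → Summable fun k : ℤ => ⨆ τ : Set.Icc (0 : ℝ) T, ‖r k (τ : ℝ)‖)
    (hmild : ∀ k : ℤ, ∀ t : ℝ, 0 ≤ t →
      r k t = Complex.exp (-Complex.I * p * (2 * Real.pi ^ 2) * (ξ : ℂ)
              * (2 * (k : ℂ) - ξ) * t / (L : ℂ) ^ 2) * r k 0
        + ∫ τ in (0 : ℝ)..t,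
            Complex.exp (-Complex.I * p * (2 * Real.pi ^ 2) * (ξ : ℂ)
                * (2 * (k : ℂ) - ξ) * ((t : ℂ) - τ) / (L : ℂ) ^ 2) *
              (Complex.I * q * (P (k - ξ) - P k)) * ∑' K : ℤ, r K τ) :
    ∀ t : ℝ, 0 ≤ t →
      (∑' K : ℤ, r K t)
        = (∑' k : ℤ, Complex.exp (-Complex.I * p * (2 * Real.pi ^ 2) * (ξ : ℂ)
              * (2 * (k : ℂ) - ξ) * t / (L : ℂ) ^ 2) * r k 0)
          + ∫ τ in (0 : ℝ)..t,
              (∑' k : ℤ, Complex.exp (-Complex.I * p * (2 * Real.pi ^ 2) * (ξ : ℂ)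
                  * (2 * (k : ℂ) - ξ) * ((t : ℂ) - τ) / (L : ℂ) ^ 2) *
                (Complex.I * q * (P (k - ξ) - P k))) * ∑' K : ℤ, r K τ := by
  intro t ht
  have hf : ContinuousOn (fun τ => ∑' K : ℤ, r K τ) (uIcc 0 t) := by
    rw [uIcc_of_le ht]
    refine (continuousOn_tsum_of_summable_iSup_norm isCompact_Icc
      (fun k => (hcont k).mono Icc_subset_Ici_self) (hsumT (t + 1) (by linarith))).mono ?_
    exact Icc_subset_Icc_right (by linarith)
  have hcoef : Summable fun k : ℤ => ‖Complex.I * q * (P (k - ξ) - P k)‖ := by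
    have hP' := summable_norm_iff.mp hP
    exact summable_norm_iff.mpr (((hP'.comp_injective sub_left_injective).sub hP').mul_left _)
  refine (tsum_congr fun k => hmild k t ht).trans (HasSum.add ?_ ?_).tsum_eq
  · refine (hsum0.of_norm_bounded fun k => ?_).hasSum
    rw [norm_mul, norm_cexp_alber_phase, one_mul]
  · refine hasSum_intervalIntegral_mul_of_norm_le hcoef (fun k => by fun_prop)
      (fun k τ _ => ?_) hf
    rw [norm_mul, ← Complex.ofReal_sub, norm_cexp_alber_phase, one_mul]

/-- If the Fourier coefficients `r_{k,ξ−k}` satisfy the mild-form linearized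
periodized Alber equations (with suitable continuity and summability), then
`f(ξ,t) = Σ_K r_{K,ξ−K}(t)` satisfies the scalar Volterra equation
`f(ξ,t) = φ_L(ξ,t) + ∫_0^t h_L(ξ,t−τ) f(ξ,τ) dτ`. -/
theorem volterra_equation_for_f (q p L : ℝ) (hL : 0 < L) (ξ : ℤ) (P : ℤ → ℂ)
    (hP : Summable fun n => ‖P n‖)
    (r : ℤ → ℝ → ℂ)
    (hcont : ∀ k, ContinuousOn (r k) (Set.Ici (0 : ℝ)))
    (hsum0 : Summable fun k : ℤ => ‖r k 0‖)
    (hsumT : ∀ T : ℝ, 0 < T → Summable fun k : ℤ => ⨆ τ : Set.Icc (0 : ℝ) T, ‖r k (τ : ℝ)‖)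
    (hmild : ∀ k : ℤ, ∀ t : ℝ, 0 ≤ t →
      r k t = Complex.exp (-Complex.I * p * (2 * Real.pi ^ 2) * (ξ : ℂ)
              * (2 * (k : ℂ) - ξ) * t / (L : ℂ) ^ 2) * r k 0
        + ∫ τ in (0 : ℝ)..t,
            Complex.exp (-Complex.I * p * (2 * Real.pi ^ 2) * (ξ : ℂ)
                * (2 * (k : ℂ) - ξ) * ((t : ℂ) - τ) / (L : ℂ) ^ 2) *
              (Complex.I * q * (P (k - ξ) - P k)) * ∑' K : ℤ, r K τ) :
    ∀ t : ℝ, 0 ≤ t →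
      (∑' K : ℤ, r K t)
        = (∑' k : ℤ, Complex.exp (-Complex.I * p * (2 * Real.pi ^ 2) * (ξ : ℂ)
              * (2 * (k : ℂ) - ξ) * t / (L : ℂ) ^ 2) * r k 0)
          + ∫ τ in (0 : ℝ)..t,
              (∑' k : ℤ, Complex.exp (-Complex.I * p * (2 * Real.pi ^ 2) * (ξ : ℂ)
                  * (2 * (k : ℂ) - ξ) * ((t : ℂ) - τ) / (L : ℂ) ^ 2) *
                (Complex.I * q * (P (k - ξ) - P k))) * ∑' K : ℤ, r K τ :=
  volterra_equation_for_f_general q p L ξ P hP r hcont hsum0 hsumT hmild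
end

section
/- Let p, q be real constants, let S : ℝ → ℝ be continuously differentiable with compact support, let X ∈ ℝ, and let ω ∈ ℂ with Re(ω) > 0. Let (L_m) be a sequence of positive reals with L_m → ∞ and (ξ_m) a sequence of integers with ξ_m / L_m → X. Then h̃_{L_m}(ξ_m, ω) := (iq/L_m) Σ_{k∈ℤ} (S((k−ξ_m)/L_m) − S(k/L_m)) / (ω + i p 2π² ξ_m (2k−ξ_m)/L_m²) converges, as m → ∞, to iq ∫_{−∞}^{∞} (S(k − X/2) − S(k + X/2)) / (ω + 4π² i p k X) dk. -/
/-!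
With `u = ξ / L` and `v = k / L`, the periodized kernel is `i q` times the Riemann sum
`L⁻¹ ∑ₖ Φ(u, k / L)` of `Φ(u, v) = (S(v - u) - S v) / (ω + 2π² i p u (2v - u))`, and this sum is
exactly the integral of the step function `x ↦ Φ(u, ⌊L x⌋ / L)`. Because `Re ω > 0` the denominator
never vanishes, so `Φ` is jointly continuous, and for `u` near `X` it vanishes outside a fixed
bounded set of `v`. Dominated convergence therefore gives the limit `∫ Φ(X, v) dv`, and the shift
`v = k + X / 2` turns it into the infinite-line kernel.
-/
open MeasureTheory Filter Topology Set Metric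

section StepFunction

variable {E : Type*} [NormedAddCommGroup E]

lemma comp_floor_eq_sum_indicator (f : ℤ → E) {T : Finset ℤ} (hT : f.support ⊆ T) (y : ℝ) :
    f ⌊y⌋ = ∑ k ∈ T, (Ico (k : ℝ) (k + 1)).indicator (fun _ => f k) y := by
  have mem_Ico_iff (k : ℤ) : y ∈ Ico (k : ℝ) (k + 1) ↔ ⌊y⌋ = k := by
    rw [mem_Ico, Int.floor_eq_iff]
  rw [Finset.sum_eq_single ⌊y⌋]
  · rw [indicator_of_mem ((mem_Ico_iff _).2 rfl)]
  · exact fun k _ hk => indicator_of_notMem (fun hy => hk ((mem_Ico_iff k).1 hy).symm) _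
  · intro hy
    rw [indicator_of_mem ((mem_Ico_iff _).2 rfl)]
    exact Function.notMem_support.1 fun h => hy (hT h)

lemma integrable_indicator_Ico_const (a b : ℝ) (c : E) :
    Integrable ((Ico a b).indicator fun _ : ℝ => c) :=
  (integrableOn_const measure_Ico_lt_top.ne).integrable_indicator measurableSet_Ico

lemma integrable_comp_floor {f : ℤ → E} (hf : f.support.Finite) :
    Integrable fun y : ℝ => f ⌊y⌋ := by
  simp_rw [comp_floor_eq_sum_indicator f hf.coe_toFinset.superset]
  exact integrable_finsetSum _ fun k _ => integrable_indicator_Ico_const _ _ _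

lemma integral_comp_floor [NormedSpace ℝ E] [CompleteSpace E] {f : ℤ → E}
    (hf : f.support.Finite) : ∫ y : ℝ, f ⌊y⌋ = ∑' k, f k := by
  simp_rw [comp_floor_eq_sum_indicator f hf.coe_toFinset.superset]
  rw [integral_finsetSum _ fun k _ => integrable_indicator_Ico_const _ _ _,
    tsum_eq_sum fun k hk => Function.notMem_support.1 fun h => hk (hf.mem_toFinset.2 h)]
  refine Finset.sum_congr rfl fun k _ => ?_
  rw [integral_indicator_const _ measurableSet_Ico, measureReal_def, Real.volume_Ico,
    add_sub_cancel_left, ENNReal.toReal_ofReal zero_le_one, one_smul]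

lemma integrable_comp_floor_mul {f : ℤ → E} (hf : f.support.Finite) {L : ℝ} (hL : L ≠ 0) :
    Integrable fun x : ℝ => f ⌊L * x⌋ :=
  (integrable_comp_floor hf).comp_mul_left' hL

lemma integral_comp_floor_mul [NormedSpace ℝ E] [CompleteSpace E] {f : ℤ → E}
    (hf : f.support.Finite) {L : ℝ} (hL : 0 < L) : ∫ x : ℝ, f ⌊L * x⌋ = L⁻¹ • ∑' k, f k := by
  rw [Measure.integral_comp_mul_left (fun y => f ⌊y⌋), integral_comp_floor hf,
    abs_of_pos (inv_pos.2 hL)]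

end StepFunction

lemma floor_mul_div_mem_Ioc {L : ℝ} (hL : 0 < L) (x : ℝ) :
    (⌊L * x⌋ : ℝ) / L ∈ Ioc (x - L⁻¹) x := by
  constructor
  · rw [lt_div_iff₀ hL, sub_mul, inv_mul_cancel₀ hL.ne', mul_comm]
    exact Int.sub_one_lt_floor _
  · rw [div_le_iff₀ hL, mul_comm]
    exact Int.floor_le _

lemma tendsto_floor_mul_div {ι : Type*} {l : Filter ι} {L : ι → ℝ} (hL : Tendsto L l atTop)
    (x : ℝ) : Tendsto (fun i => (⌊L i * x⌋ : ℝ) / L i) l (𝓝 x) := by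
  have lower : Tendsto (fun i => x - (L i)⁻¹) l (𝓝 x) := by
    simpa using tendsto_const_nhds.sub hL.inv_tendsto_atTop
  refine tendsto_of_tendsto_of_tendsto_of_le_of_le' lower tendsto_const_nhds ?_ ?_ <;>
    filter_upwards [hL.eventually_gt_atTop 0] with i hi
  exacts [(floor_mul_div_mem_Ioc hi x).1.le, (floor_mul_div_mem_Ioc hi x).2]

section RiemannSum

variable {E : Type*} [NormedAddCommGroup E]

lemma finite_support_comp_intCast_div {f : ℝ → E} {R L : ℝ} (hL : 0 < L)
    (hf : ∀ v, R ≤ |v| → f v = 0) : (fun k : ℤ => f (k / L)).support.Finite := by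
  refine (finite_Icc (-⌈R * L⌉) ⌈R * L⌉).subset fun k hk => ?_
  have hk : |(k : ℝ)| < R * L := by
    by_contra! h
    exact hk (hf _ (by rwa [abs_div, abs_of_pos hL, le_div_iff₀ hL]))
  have hceil := Int.le_ceil (R * L)
  obtain ⟨hlow, hhigh⟩ := abs_lt.1 hk
  constructor
  · exact_mod_cast (by linarith : -(⌈R * L⌉ : ℝ) ≤ k)
  · exact_mod_cast (by linarith : (k : ℝ) ≤ ⌈R * L⌉)

variable {F : ℝ → ℝ → E} {X R : ℝ}

lemma exists_eventually_norm_le_of_continuous (hF : Continuous (Function.uncurry F))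
    (hsupp : ∀ᶠ u in 𝓝 X, ∀ v, R ≤ |v| → F u v = 0) :
    ∃ C, ∀ᶠ u in 𝓝 X, ∀ v, ‖F u v‖ ≤ C := by
  obtain ⟨K, ⟨hKX, hK⟩, hKsupp⟩ := (compact_basis_nhds X).mem_iff.1 hsupp
  obtain ⟨C, hC⟩ :=
    (hK.prod (isCompact_closedBall (0 : ℝ) R)).exists_bound_of_continuousOn hF.continuousOn
  refine ⟨max C 0, mem_of_superset hKX fun u hu v => ?_⟩
  by_cases hv : R ≤ |v|
  · rw [hKsupp hu v hv, norm_zero]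
    exact le_max_right _ _
  · refine le_max_of_le_left (hC (u, v) ⟨hu, ?_⟩)
    rw [mem_closedBall_zero_iff, Real.norm_eq_abs]
    exact (not_le.1 hv).le

theorem tendsto_riemannSum [NormedSpace ℝ E] [CompleteSpace E] {ι : Type*} {l : Filter ι}
    [l.IsCountablyGenerated] (hF : Continuous (Function.uncurry F))
    (hsupp : ∀ᶠ u in 𝓝 X, ∀ v, R ≤ |v| → F u v = 0) {L u : ι → ℝ} (hL : Tendsto L l atTop)
    (hu : Tendsto u l (𝓝 X)) :
    Tendsto (fun i => (L i)⁻¹ • ∑' k : ℤ, F (u i) (k / L i)) l (𝓝 (∫ v, F X v)) := by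
  obtain ⟨C, hC⟩ := exists_eventually_norm_le_of_continuous hF hsupp
  have hgood : ∀ᶠ i in l, 1 ≤ L i ∧ (∀ v, R ≤ |v| → F (u i) v = 0) ∧ ∀ v, ‖F (u i) v‖ ≤ C :=
    (hL.eventually_ge_atTop 1).and (hu.eventually (hsupp.and hC))
  have hsum : ∀ᶠ i in l, ∫ x, F (u i) ((⌊L i * x⌋ : ℝ) / L i)
      = (L i)⁻¹ • ∑' k : ℤ, F (u i) (k / L i) := by
    filter_upwards [hgood] with i ⟨hL1, hsupp_i, _⟩
    exact integral_comp_floor_mul (finite_support_comp_intCast_div (by linarith) hsupp_i)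
      (by linarith)
  refine (tendsto_integral_filter_of_dominated_convergence
    ((closedBall 0 (R + 1)).indicator fun _ => C) ?_ ?_ ?_ ?_).congr' hsum
  · filter_upwards [hgood] with i ⟨hL1, hsupp_i, _⟩
    exact (integrable_comp_floor_mul (finite_support_comp_intCast_div (by linarith) hsupp_i)
      (by positivity)).aestronglyMeasurable
  · filter_upwards [hgood] with i ⟨hL1, hsupp_i, hC_i⟩
    refine ae_of_all _ fun x => ?_
    by_cases hx : x ∈ closedBall 0 (R + 1)
    · rw [indicator_of_mem hx]
      exact hC_i _
    rw [indicator_of_notMem hx, hsupp_i, norm_zero]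
    rw [mem_closedBall_zero_iff, Real.norm_eq_abs, not_le] at hx
    obtain ⟨hlow, hhigh⟩ := floor_mul_div_mem_Ioc (by linarith : 0 < L i) x
    have hinv : (L i)⁻¹ ≤ 1 := inv_le_one_of_one_le₀ hL1
    have hdist : |x - (⌊L i * x⌋ : ℝ) / L i| ≤ 1 := abs_le.2 ⟨by linarith, by linarith⟩
    linarith [abs_sub_abs_le_abs_sub x ((⌊L i * x⌋ : ℝ) / L i)]
  · exact (integrableOn_const measure_closedBall_lt_top.ne).integrable_indicator
      measurableSet_closedBall
  · exact ae_of_all _ fun x =>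
      (hF.tendsto (X, x)).comp (hu.prodMk_nhds (tendsto_floor_mul_div hL x))

end RiemannSum

section AlberKernel

/-- The summand of `h̃_L(ξ, ω)` in the rescaled variables `u = ξ / L`, `v = k / L`. -/
noncomputable def alberIntegrand (S : ℝ → ℝ) (p : ℝ) (ω : ℂ) (u v : ℝ) : ℂ :=
  ((S (v - u) - S v : ℝ) : ℂ) / (ω + Complex.I * p * (2 * Real.pi ^ 2) * u * (2 * v - u))

variable {S : ℝ → ℝ} {p : ℝ} {ω : ℂ}

lemma add_I_mul_ofReal_ne_zero (hω : 0 < ω.re) (r : ℝ) : ω + Complex.I * r ≠ 0 :=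
  fun h => hω.ne' (by simpa using congrArg Complex.re h)

lemma continuous_alberIntegrand (hS : Continuous S) (hω : 0 < ω.re) :
    Continuous (Function.uncurry (alberIntegrand S p ω)) := by
  refine Continuous.div (by fun_prop) (by fun_prop) fun z => ?_
  convert add_I_mul_ofReal_ne_zero hω (p * (2 * Real.pi ^ 2) * z.1 * (2 * z.2 - z.1)) using 2
  push_cast
  ring

lemma alberIntegrand_eq_zero {R A u v : ℝ} (hS : ∀ w, R ≤ |w| → S w = 0) (hu : |u| ≤ A)
    (hv : R + A ≤ |v|) : alberIntegrand S p ω u v = 0 := by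
  have hvu : R ≤ |v - u| := by linarith [abs_sub_abs_le_abs_sub v u]
  rw [alberIntegrand, hS _ hvu, hS v (by linarith [abs_nonneg u]), sub_self, Complex.ofReal_zero,
    zero_div]

lemma periodizedSummand_eq_alberIntegrand {L : ℝ} (hL : L ≠ 0) (ξ k : ℤ) :
    ((S (((k : ℝ) - (ξ : ℝ)) / L) - S ((k : ℝ) / L) : ℝ) : ℂ) /
        (ω + Complex.I * p * (2 * Real.pi ^ 2) * (ξ : ℂ) * (2 * (k : ℂ) - (ξ : ℂ)) / (L : ℂ) ^ 2)
      = alberIntegrand S p ω (ξ / L) (k / L) := by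
  have hLC : (L : ℂ) ≠ 0 := by exact_mod_cast hL
  rw [alberIntegrand, sub_div]
  congr 2
  push_cast
  field_simp

lemma integral_alberIntegrand (X : ℝ) :
    ∫ v, alberIntegrand S p ω X v
      = ∫ k : ℝ, ((S (k - X / 2) - S (k + X / 2) : ℝ) : ℂ) /
          (ω + 4 * (Real.pi : ℂ) ^ 2 * Complex.I * p * k * X) := by
  rw [← integral_add_right_eq_self _ (X / 2)]
  congr 1 with k
  rw [alberIntegrand, show k + X / 2 - X = k - X / 2 by ring]
  congr 1
  push_cast
  ring

end AlberKernel

theorem periodized_kernel_converges_general (p q : ℝ) (S : ℝ → ℝ)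
    (hS : ContDiff ℝ 1 S) (hsupp : HasCompactSupport S)
    (X : ℝ) (ω : ℂ) (hω : 0 < ω.re)
    (Lseq : ℕ → ℝ)
    (hLtend : Filter.Tendsto Lseq Filter.atTop Filter.atTop)
    (ξ : ℕ → ℤ)
    (hξ : Filter.Tendsto (fun m => ((ξ m : ℝ)) / Lseq m) Filter.atTop (nhds X)) :
    Filter.Tendsto (fun m =>
        Complex.I * q / (Lseq m : ℂ) * ∑' k : ℤ,
          ((S (((k : ℝ) - (ξ m : ℝ)) / Lseq m) - S ((k : ℝ) / Lseq m) : ℝ) : ℂ) /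
            (ω + Complex.I * p * (2 * Real.pi ^ 2) * ((ξ m : ℤ) : ℂ)
              * (2 * (k : ℂ) - ((ξ m : ℤ) : ℂ)) / (Lseq m : ℂ) ^ 2))
      Filter.atTop
      (nhds (Complex.I * q * ∫ k : ℝ,
        ((S (k - X / 2) - S (k + X / 2) : ℝ) : ℂ) /
          (ω + 4 * (Real.pi : ℂ) ^ 2 * Complex.I * p * k * X))) := by
  obtain ⟨R, -, hR⟩ := hsupp.exists_pos_le_norm
  have hvanish : ∀ᶠ u in 𝓝 X, ∀ v, R + (|X| + 1) ≤ |v| → alberIntegrand S p ω u v = 0 := by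
    filter_upwards [closedBall_mem_nhds X one_pos] with u hu v hv
    rw [mem_closedBall, Real.dist_eq] at hu
    exact alberIntegrand_eq_zero (by simpa using hR)
      (by linarith [abs_sub_abs_le_abs_sub u X]) hv
  have hlim := (tendsto_riemannSum (continuous_alberIntegrand hS.continuous hω) hvanish hLtend
    hξ).const_mul (Complex.I * q)
  rw [integral_alberIntegrand] at hlim
  refine hlim.congr' ?_
  filter_upwards [hLtend.eventually_gt_atTop 0] with m hm
  simp_rw [periodizedSummand_eq_alberIntegrand hm.ne', Complex.real_smul]
  push_cast
  ring

/-- For `C¹` compactly supported `S`, `Re ω > 0`, `L_m → ∞` and integers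
`ξ_m` with `ξ_m/L_m → X`, the periodized kernels
`h̃_{L_m}(ξ_m, ω) = (iq/L_m)Σ_{k∈ℤ}(S((k−ξ_m)/L_m) − S(k/L_m))/(ω + ip2π²ξ_m(2k−ξ_m)/L_m²)`
converge to the infinite-line kernel
`iq∫(S(k − X/2) − S(k + X/2))/(ω + 4π²ipkX)dk`. -/
theorem periodized_kernel_converges (p q : ℝ) (S : ℝ → ℝ)
    (hS : ContDiff ℝ 1 S) (hsupp : HasCompactSupport S)
    (X : ℝ) (ω : ℂ) (hω : 0 < ω.re)
    (Lseq : ℕ → ℝ) (hLpos : ∀ m, 0 < Lseq m)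
    (hLtend : Filter.Tendsto Lseq Filter.atTop Filter.atTop)
    (ξ : ℕ → ℤ)
    (hξ : Filter.Tendsto (fun m => ((ξ m : ℝ)) / Lseq m) Filter.atTop (nhds X)) :
    Filter.Tendsto (fun m =>
        Complex.I * q / (Lseq m : ℂ) * ∑' k : ℤ,
          ((S (((k : ℝ) - (ξ m : ℝ)) / Lseq m) - S ((k : ℝ) / Lseq m) : ℝ) : ℂ) /
            (ω + Complex.I * p * (2 * Real.pi ^ 2) * ((ξ m : ℤ) : ℂ)
              * (2 * (k : ℂ) - ((ξ m : ℤ) : ℂ)) / (Lseq m : ℂ) ^ 2))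
      Filter.atTop
      (nhds (Complex.I * q * ∫ k : ℝ,
        ((S (k - X / 2) - S (k + X / 2) : ℝ) : ℂ) /
          (ω + 4 * (Real.pi : ℂ) ^ 2 * Complex.I * p * k * X))) :=
  periodized_kernel_converges_general p q S hS hsupp X ω hω Lseq hLtend ξ hξ
end

section
/- Let p, q be real constants, L > 0, ξ ∈ ℤ, and let (P_n)_{n∈ℤ} be an absolutely summable family of complex numbers. Then the function ω ↦ h̃_L(ξ, ω) = iq Σ_{k∈ℤ} (P_{k−ξ} − P_k) / (ω + i p 2π² ξ(2k−ξ)/L²) is well defined (the series converges absolutely) and analytic (complex differentiable) on the open right half-plane {ω ∈ ℂ : Re(ω) > 0}. -/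
/-!
Writing the denominator as `ω + i c_k` with `c_k` real, its modulus is at least `Re ω`, so on every
half-plane `Re ω > r > 0` the `k`-th term is bounded by `‖P_{k-ξ} - P_k‖ / r`, a summable majorant.
The series therefore converges absolutely and locally uniformly on `Re ω > 0`, and a locally
uniform limit of holomorphic functions is holomorphic.
-/

open Complex

section ResolventSeries

variable {ι : Type*} {a : ι → ℂ} (c : ι → ℝ)

lemma re_le_norm_add_I_mul (ω : ℂ) (t : ℝ) : ω.re ≤ ‖ω + I * t‖ := by
  simpa using re_le_norm (ω + I * t)

lemma norm_div_add_I_mul_le {r : ℝ} (hr : 0 < r) (b ω : ℂ) (t : ℝ) (hω : r ≤ ω.re) :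
    ‖b / (ω + I * t)‖ ≤ ‖b‖ / r := by
  rw [norm_div]
  exact div_le_div_of_nonneg_left (norm_nonneg b) hr (hω.trans (re_le_norm_add_I_mul ω t))

lemma summable_norm_div_add_I_mul (ha : Summable fun k => ‖a k‖) {ω : ℂ} (hω : 0 < ω.re) :
    Summable fun k => ‖a k / (ω + I * c k)‖ :=
  (ha.div_const ω.re).of_nonneg_of_le (fun _ => norm_nonneg _)
    fun k => norm_div_add_I_mul_le hω (a k) ω (c k) le_rfl

lemma differentiableOn_tsum_div_add_I_mul_of_lt_re (ha : Summable fun k => ‖a k‖) {r : ℝ}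
    (hr : 0 < r) : DifferentiableOn ℂ (fun ω => ∑' k, a k / (ω + I * c k)) {ω | r < ω.re} := by
  refine differentiableOn_tsum_of_summable_norm (ha.div_const r) (fun k => ?_)
    (isOpen_lt continuous_const continuous_re)
    fun k ω hω => norm_div_add_I_mul_le hr (a k) ω (c k) (le_of_lt hω)
  refine (differentiableOn_const _).div (differentiableOn_id.add_const _) fun ω hω => ?_
  exact norm_pos_iff.mp ((hr.trans hω).trans_le (re_le_norm_add_I_mul ω (c k)))

lemma differentiableOn_tsum_div_add_I_mul (ha : Summable fun k => ‖a k‖) :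
    DifferentiableOn ℂ (fun ω => ∑' k, a k / (ω + I * c k)) {ω | 0 < ω.re} := by
  intro ω hω
  have hω' : ω.re / 2 < ω.re := half_lt_self hω
  exact ((differentiableOn_tsum_div_add_I_mul_of_lt_re c ha (half_pos hω)).differentiableAt
    ((isOpen_lt continuous_const continuous_re).mem_nhds hω')).differentiableWithinAt

end ResolventSeries

theorem kernel_analytic_on_right_half_plane_general (p q L : ℝ) (ξ : ℤ)
    (P : ℤ → ℂ) (hP : Summable fun n => ‖P n‖) :
    (∀ ω : ℂ, 0 < ω.re → Summable fun k : ℤ =>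
      ‖(P (k - ξ) - P k) /
        (ω + Complex.I * p * (2 * Real.pi ^ 2) * (ξ : ℂ) * (2 * (k : ℂ) - ξ) / (L : ℂ) ^ 2)‖) ∧
    DifferentiableOn ℂ (fun ω : ℂ =>
        Complex.I * q * ∑' k : ℤ, (P (k - ξ) - P k) /
          (ω + Complex.I * p * (2 * Real.pi ^ 2) * (ξ : ℂ) * (2 * (k : ℂ) - ξ) / (L : ℂ) ^ 2))
      {ω : ℂ | 0 < ω.re} := by
  set c : ℤ → ℝ := fun k => p * (2 * Real.pi ^ 2) * ξ * (2 * k - ξ) / L ^ 2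
  have hden : ∀ (k : ℤ) (ω : ℂ),
      ω + I * p * (2 * Real.pi ^ 2) * (ξ : ℂ) * (2 * (k : ℂ) - ξ) / (L : ℂ) ^ 2
        = ω + I * c k := by
    intro k ω
    simp only [c]
    push_cast
    ring
  have ha : Summable fun k : ℤ => ‖P (k - ξ) - P k‖ :=
    ((hP.comp_injective sub_left_injective).add hP).of_nonneg_of_le (fun _ => norm_nonneg _)
      fun k => norm_sub_le _ _
  simp only [hden]
  exact ⟨fun ω hω => summable_norm_div_add_I_mul c ha hω,
    (differentiableOn_tsum_div_add_I_mul c ha).const_mul _⟩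

/-- For absolutely summable `(P_n)`, the Laplace-transformed kernel
`ω ↦ h̃_L(ξ,ω) = iq Σ_{k∈ℤ}(P_{k−ξ} − P_k)/(ω + ip2π²ξ(2k−ξ)/L²)` is well defined (the series
converges absolutely) and complex differentiable on the open right half-plane `{Re ω > 0}`. -/
theorem kernel_analytic_on_right_half_plane (p q L : ℝ) (hL : 0 < L) (ξ : ℤ)
    (P : ℤ → ℂ) (hP : Summable fun n => ‖P n‖) :
    (∀ ω : ℂ, 0 < ω.re → Summable fun k : ℤ =>
      ‖(P (k - ξ) - P k) /
        (ω + Complex.I * p * (2 * Real.pi ^ 2) * (ξ : ℂ) * (2 * (k : ℂ) - ξ) / (L : ℂ) ^ 2)‖) ∧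
    DifferentiableOn ℂ (fun ω : ℂ =>
        Complex.I * q * ∑' k : ℤ, (P (k - ξ) - P k) /
          (ω + Complex.I * p * (2 * Real.pi ^ 2) * (ξ : ℂ) * (2 * (k : ℂ) - ξ) / (L : ℂ) ^ 2))
      {ω : ℂ | 0 < ω.re} :=
  kernel_analytic_on_right_half_plane_general p q L ξ P hP
end
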